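/- arXiv:1405.4758 — 2 statements merged into one kernel-verified Lean document; each statement's English description precedes it below -/
import Mathlib

section
/- Let X_k(n), n ≥ 1, be i.i.d. Bernoulli(θ_k) sequences for k = 1,…,K (independent across k), with a predictable sampling rule B(n) ∈ {0,1}^K, empirical counts t_k(n) and empirical means θ̂_k(n). Then for all constants 0 ≤ C_k ≤ θ_k and integers t̄_k ≥ 1: P[for all k: θ̂_k(n) ≤ C_k and t_k(n) ≥ t̄_k] ≤ ∏_{k=1}^K exp(−t̄_k · I(C_k, θ_k)). -/
/-!
Change of measure: compare the true means `θ k` with the alternative means `C k`. The likelihood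
ratio of the outcomes observed before round `n` is a product with one factor per sampled pair
(arm, round). The factor of `(k, s)` is a function of `X k s` with mean one, independent of the
earlier outcomes, which decide whether it is included; hence the ratio has expectation one. (For
`C k > 0` it is the exponential martingale `G(n)` with the optimal `λ_k`; unlike `G(n)` it still
makes sense when `C k = 0`.) On the event, the factors of arm `k` multiply to at least
`exp (t_k(n) I(C_k, θ_k)) ≥ exp (t̄_k I(C_k, θ_k))`, and Markov's inequality concludes.
-/

open MeasureTheory ProbabilityTheory Finset

/-- KL divergence between Bernoulli distributions with means `x` and `y`. -/
noncomputable def klBer (x y : ℝ) : ℝ :=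
  x * Real.log (x / y) + (1 - x) * Real.log ((1 - x) / (1 - y))

open scoped ENNReal

lemma klBer_eq_klFun {x y : ℝ} (hy0 : y ≠ 0) (hy1 : y ≠ 1) :
    klBer x y = y * InformationTheory.klFun (x / y)
      + (1 - y) * InformationTheory.klFun ((1 - x) / (1 - y)) := by
  have : 1 - y ≠ 0 := sub_ne_zero.mpr (Ne.symm hy1)
  simp only [klBer, InformationTheory.klFun]
  field_simp
  ring

lemma klBer_nonneg {x y : ℝ} (hx0 : 0 ≤ x) (hx1 : x ≤ 1) (hy0 : 0 < y) (hy1 : y < 1) :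
    0 ≤ klBer x y := by
  rw [klBer_eq_klFun hy0.ne' hy1.ne]
  have h1 := InformationTheory.klFun_nonneg (div_nonneg hx0 hy0.le)
  have h2 := InformationTheory.klFun_nonneg (div_nonneg (sub_nonneg.2 hx1) (sub_pos.2 hy1).le)
  have : 0 < 1 - y := sub_pos.2 hy1
  positivity

section GeneratedSigma

variable {Ω ι β : Type*} [MeasurableSpace β] {Y : ι → Ω → β}

abbrev sigmaGen (Y : ι → Ω → β) (P : Set ι) : MeasurableSpace Ω :=
  ⨆ i ∈ P, MeasurableSpace.comap (Y i) inferInstance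

lemma measurable_sigmaGen {P : Set ι} {i : ι} (hi : i ∈ P) : Measurable[sigmaGen Y P] (Y i) :=
  (comap_measurable (Y i)).mono (le_iSup₂ (f := fun i (_ : i ∈ P) =>
    MeasurableSpace.comap (Y i) inferInstance) i hi) le_rfl

lemma sigmaGen_mono {P Q : Set ι} (h : P ⊆ Q) : sigmaGen Y P ≤ sigmaGen Y Q :=
  biSup_mono h

variable {mΩ : MeasurableSpace Ω} {μ : Measure Ω}

lemma sigmaGen_le (hY : ∀ i, Measurable (Y i)) (P : Set ι) : sigmaGen Y P ≤ mΩ :=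
  iSup₂_le fun i _ => (hY i).comap_le

lemma indep_sigmaGen_of_disjoint (hY : ∀ i, Measurable (Y i)) (hind : iIndepFun Y μ)
    {P Q : Set ι} (h : Disjoint P Q) : Indep (sigmaGen Y P) (sigmaGen Y Q) μ :=
  indep_iSup_of_disjoint (fun i => (hY i).comap_le) hind.iIndep h

lemma lintegral_mul_prod_ite_eq (hY : ∀ i, Measurable (Y i)) (hind : iIndepFun Y μ)
    {P : Set ι} {F : Ω → ℝ≥0∞} (hF : Measurable[sigmaGen Y P] F)
    {A : ι → Set Ω} [∀ j, DecidablePred (· ∈ A j)] {Z : ι → Ω → ℝ≥0∞}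
    (J : Finset ι) (hJP : ∀ j ∈ J, j ∉ P) (hA : ∀ j ∈ J, MeasurableSet[sigmaGen Y P] (A j))
    (hZ : ∀ j ∈ J, Measurable[sigmaGen Y {j}] (Z j)) (hZ1 : ∀ j ∈ J, ∫⁻ ω, Z j ω ∂μ = 1) :
    ∫⁻ ω, F ω * ∏ j ∈ J, (if ω ∈ A j then Z j ω else 1) ∂μ = ∫⁻ ω, F ω ∂μ := by
  classical
  induction J using Finset.induction_on with
  | empty => simp
  | insert a J ha ih =>
    simp only [Finset.forall_mem_insert] at hJP hA hZ hZ1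
    set R : Ω → ℝ≥0∞ := fun ω => F ω * ∏ j ∈ J, (if ω ∈ A j then Z j ω else 1)
    have hR : Measurable[sigmaGen Y (P ∪ J)] R := by
      refine (hF.mono (sigmaGen_mono Set.subset_union_left) le_rfl).mul ?_
      refine Finset.measurable_prod _ fun j hj => Measurable.ite ?_ ?_ measurable_const
      · exact sigmaGen_mono Set.subset_union_left _ (hA.2 j hj)
      · exact (hZ.2 j hj).mono (sigmaGen_mono (by simpa using Or.inr hj)) le_rfl
    have hAa : MeasurableSet (A a) := sigmaGen_le hY P _ hA.1
    have hindep : Indep (sigmaGen Y (P ∪ J)) (sigmaGen Y {a}) μ :=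
      indep_sigmaGen_of_disjoint hY hind (by simpa using ⟨hJP.1, ha⟩)
    have hRZ : ∫⁻ ω in A a, R ω * Z a ω ∂μ = ∫⁻ ω in A a, R ω ∂μ := by
      rw [← lintegral_indicator hAa, ← lintegral_indicator hAa]
      have : (A a).indicator (fun ω => R ω * Z a ω) = fun ω => (A a).indicator R ω * Z a ω :=
        funext fun ω => Set.indicator_mul_left _ _ _
      rw [this, lintegral_mul_eq_lintegral_mul_lintegral_of_independent_measurableSpace
        (sigmaGen_le hY _) (sigmaGen_le hY _) hindep
        (hR.indicator (sigmaGen_mono Set.subset_union_left _ hA.1)) hZ.1, hZ1.1, mul_one]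
    calc ∫⁻ ω, F ω * ∏ j ∈ insert a J, (if ω ∈ A j then Z j ω else 1) ∂μ
        = ∫⁻ ω, R ω * (if ω ∈ A a then Z a ω else 1) ∂μ := by
          simp only [R, Finset.prod_insert ha]
          congr 1; ext ω; ring
      _ = ∫⁻ ω in A a, R ω * Z a ω ∂μ + ∫⁻ ω in (A a)ᶜ, R ω ∂μ := by
          rw [← lintegral_add_compl _ hAa]
          congr 1
          · exact setLIntegral_congr_fun hAa fun ω hω => by simp [hω]
          · exact setLIntegral_congr_fun hAa.compl fun ω hω => by simp [Set.notMem_of_mem_compl hω]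
      _ = ∫⁻ ω, F ω ∂μ := by rw [hRZ, lintegral_add_compl _ hAa, ih hJP.2 hA.2 hZ.2 hZ1.2]

end GeneratedSigma

noncomputable def bernoulliLR (c θ x : ℝ) : ℝ :=
  if x = 1 then c / θ else (1 - c) / (1 - θ)

section Bernoulli

variable {c θ : ℝ}

lemma measurable_bernoulliLR : Measurable (bernoulliLR c θ) :=
  Measurable.ite (measurableSet_singleton 1) measurable_const measurable_const

lemma bernoulliLR_nonneg (hc0 : 0 ≤ c) (hc1 : c ≤ 1) (hθ0 : 0 < θ) (hθ1 : θ < 1) (x : ℝ) :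
    0 ≤ bernoulliLR c θ x := by
  unfold bernoulliLR
  split_ifs
  · exact div_nonneg hc0 hθ0.le
  · exact div_nonneg (sub_nonneg.2 hc1) (sub_pos.2 hθ1).le

lemma lintegral_ofReal_bernoulliLR {Ω : Type*} [MeasurableSpace Ω] {μ : Measure Ω}
    [IsProbabilityMeasure μ] (hc0 : 0 ≤ c) (hc1 : c ≤ 1) (hθ0 : 0 < θ) (hθ1 : θ < 1)
    {X : Ω → ℝ} (hX : Measurable X) (hmean : (μ {ω | X ω = 1}).toReal = θ) :
    ∫⁻ ω, ENNReal.ofReal (bernoulliLR c θ (X ω)) ∂μ = 1 := by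
  set S := {ω | X ω = 1}
  have hS : MeasurableSet S := hX (measurableSet_singleton 1)
  have hμS : μ S = ENNReal.ofReal θ := by rw [← hmean, ENNReal.ofReal_toReal (measure_ne_top μ S)]
  have hμSc : μ Sᶜ = ENNReal.ofReal (1 - θ) := by
    rw [prob_compl_eq_one_sub hS, hμS, ← ENNReal.ofReal_one, ENNReal.ofReal_sub _ hθ0.le]
  rw [← lintegral_add_compl _ hS,
    setLIntegral_congr_fun hS (g := fun _ => ENNReal.ofReal (c / θ))
      fun ω hω => by simp [bernoulliLR, show X ω = 1 from hω],
    setLIntegral_congr_fun hS.compl (g := fun _ => ENNReal.ofReal ((1 - c) / (1 - θ)))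
      fun ω hω => by simp [bernoulliLR, show X ω ≠ 1 from hω],
    setLIntegral_const, setLIntegral_const, hμS, hμSc, ← ENNReal.ofReal_mul (by positivity),
    ← ENNReal.ofReal_mul (div_nonneg (sub_nonneg.2 hc1) (sub_pos.2 hθ1).le),
    div_mul_cancel₀ _ hθ0.ne', div_mul_cancel₀ _ (sub_pos.2 hθ1).ne',
    ← ENNReal.ofReal_add hc0 (sub_nonneg.2 hc1), add_sub_cancel, ENNReal.ofReal_one]

lemma ite_bernoulliLR_eq_exp (hc : c < 1) (hθ0 : 0 < θ) (hθ1 : θ < 1) {b x : ℝ}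
    (hb : b = 0 ∨ b = 1) (hx : x = 0 ∨ x = 1) (hbx : b = 1 → x = 1 → 0 < c) :
    (if b = 1 then bernoulliLR c θ x else 1) =
      Real.exp (b * (x * Real.log (c / θ) + (1 - x) * Real.log ((1 - c) / (1 - θ)))) := by
  have hpos : 0 < (1 - c) / (1 - θ) := div_pos (sub_pos.2 hc) (sub_pos.2 hθ1)
  rcases hb with rfl | rfl
  · simp
  rcases hx with rfl | rfl
  · simp [bernoulliLR, Real.exp_log hpos]
  · simp [bernoulliLR, Real.exp_log (div_pos (hbx rfl rfl) hθ0)]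

lemma sum_mul_le_mul_sum_of_mean_le {b x : ℕ → ℝ} (hb : ∀ s, b s = 0 ∨ b s = 1)
    (hx : ∀ s, x s = 0 ∨ x s = 1) {n : ℕ}
    (h : (if ∑ s ∈ range n, b s = 0 then 0
      else (∑ s ∈ range n, b s * x s) / ∑ s ∈ range n, b s) ≤ c) :
    ∑ s ∈ range n, b s * x s ≤ c * ∑ s ∈ range n, b s := by
  have hbx : ∀ s, 0 ≤ b s * x s ∧ b s * x s ≤ b s := fun s => by
    rcases hb s with h | h <;> rcases hx s with h' | h' <;> simp [h, h']
  have hle : ∑ s ∈ range n, b s * x s ≤ ∑ s ∈ range n, b s := sum_le_sum fun s _ => (hbx s).2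
  split_ifs at h with ht
  · rw [ht, mul_zero]; rwa [ht] at hle
  · have htpos : 0 < ∑ s ∈ range n, b s :=
      lt_of_le_of_ne ((sum_nonneg fun s _ => (hbx s).1).trans hle) (Ne.symm ht)
    rwa [div_le_iff₀ htpos] at h

lemma exp_mul_klBer_le_prod_ite (hc0 : 0 ≤ c) (hcθ : c ≤ θ) (hθ0 : 0 < θ) (hθ1 : θ < 1)
    {b x : ℕ → ℝ} (hb : ∀ s, b s = 0 ∨ b s = 1) (hx : ∀ s, x s = 0 ∨ x s = 1) {n : ℕ}
    (hS : ∑ s ∈ range n, b s * x s ≤ c * ∑ s ∈ range n, b s) {T : ℝ}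
    (hT : T ≤ ∑ s ∈ range n, b s) :
    Real.exp (T * klBer c θ) ≤ ∏ s ∈ range n, if b s = 1 then bernoulliLR c θ (x s) else 1 := by
  set ℓ₁ := Real.log (c / θ)
  set ℓ₀ := Real.log ((1 - c) / (1 - θ))
  set S := ∑ s ∈ range n, b s * x s
  set t := ∑ s ∈ range n, b s
  have hc1 : c < 1 := hcθ.trans_lt hθ1
  have hbx : ∀ s, 0 ≤ b s * x s := fun s => by
    rcases hb s with h | h <;> rcases hx s with h' | h' <;> simp [h, h']
  have hS0 : 0 ≤ S := sum_nonneg fun s _ => hbx s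
  -- With `c = 0` no sampled outcome is a success, so the ratio `0` is never hit.
  have hslope : (ℓ₁ - ℓ₀) * (c * t) ≤ (ℓ₁ - ℓ₀) * S ∧
      ∀ s ∈ range n, b s = 1 → x s = 1 → 0 < c := by
    rcases hc0.eq_or_lt with rfl | hcpos
    · have hS0' : S = 0 := le_antisymm (by simpa using hS) hS0
      refine ⟨by simp [hS0'], fun s hs hbs hxs => ?_⟩
      have := (sum_eq_zero_iff_of_nonneg fun s _ => hbx s).1 hS0' s hs
      simp [hbs, hxs] at this
    · refine ⟨mul_le_mul_of_nonpos_left hS (sub_nonpos.2 ?_), fun _ _ _ _ => hcpos⟩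
      exact (Real.log_le_log (div_pos hcpos hθ0) ((div_le_one hθ0).2 hcθ |>.trans
        ((one_le_div (sub_pos.2 hθ1)).2 (by linarith))))
  have hprod : ∏ s ∈ range n, (if b s = 1 then bernoulliLR c θ (x s) else 1)
      = Real.exp (ℓ₁ * S + ℓ₀ * (t - S)) := by
    rw [prod_congr rfl fun s hs => ite_bernoulliLR_eq_exp hc1 hθ0 hθ1 (hb s) (hx s)
      (hslope.2 s hs), ← Real.exp_sum]
    congr 1
    simp only [S, t, mul_sum, ← sum_sub_distrib, ← sum_add_distrib]
    exact sum_congr rfl fun s _ => by ring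
  rw [hprod, Real.exp_le_exp]
  calc T * klBer c θ ≤ t * klBer c θ :=
        mul_le_mul_of_nonneg_right hT (klBer_nonneg hc0 hc1.le hθ0 hθ1)
    _ = (ℓ₁ - ℓ₀) * (c * t) + ℓ₀ * t := by simp only [klBer, ℓ₁, ℓ₀]; ring
    _ ≤ (ℓ₁ - ℓ₀) * S + ℓ₀ * t := by linarith [hslope.1]
    _ = ℓ₁ * S + ℓ₀ * (t - S) := by ring

end Bernoulli

section Bandit

variable {Ω κ : Type*} [Fintype κ] {mΩ : MeasurableSpace Ω} {μ : Measure Ω}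
  {X : κ → ℕ → Ω → ℝ} {B : ℕ → Ω → κ → ℝ}

lemma natural_le_sigmaGen (hXvec : ∀ n, StronglyMeasurable (fun ω => fun k => X k n ω)) (r : ℕ) :
    (Filtration.natural (fun n ω => fun k => X k n ω) hXvec r : MeasurableSpace Ω) ≤
      sigmaGen (fun p : κ × ℕ => X p.1 p.2) {p | p.2 ≤ r} := by
  refine iSup₂_le fun j hj => ?_
  rw [MeasurableSpace.pi, MeasurableSpace.comap_iSup]
  refine iSup_le fun k => ?_
  rw [MeasurableSpace.comap_comp]
  exact le_iSup₂ (f := fun (p : κ × ℕ) (_ : p ∈ {p : κ × ℕ | p.2 ≤ r}) =>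
    MeasurableSpace.comap (X p.1 p.2) inferInstance) (k, j) hj

lemma measurable_sigmaGen_of_predictable
    (hXvec : ∀ n, StronglyMeasurable (fun ω => fun k => X k n ω))
    (hB0 : ∀ ω ω', B 0 ω = B 0 ω')
    (hBpred : ∀ n, StronglyMeasurable[Filtration.natural (fun n ω => fun k => X k n ω) hXvec n]
      (B (n + 1))) (s : ℕ) (k : κ) :
    Measurable[sigmaGen (fun p : κ × ℕ => X p.1 p.2) {p | p.2 < s}] (fun ω => B s ω k) := by
  cases s with
  | zero => exact @measurable_const' _ _ _ (_) _ fun ω ω' => by rw [hB0 ω ω']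
  | succ r =>
    refine ((measurable_pi_apply k).comp (hBpred r).measurable).mono ?_ le_rfl
    exact (natural_le_sigmaGen hXvec r).trans (sigmaGen_mono fun p hp => Nat.lt_succ_of_le hp)

noncomputable def lrProcess (X : κ → ℕ → Ω → ℝ) (B : ℕ → Ω → κ → ℝ) (C θ : κ → ℝ) (n : ℕ)
    (ω : Ω) : ℝ≥0∞ :=
  ∏ s ∈ range n, ∏ k,
    if B s ω k = 1 then ENNReal.ofReal (bernoulliLR (C k) (θ k) (X k s ω)) else 1

variable {C θ : κ → ℝ}

lemma measurable_lrProcess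
    (hB : ∀ s k, Measurable[sigmaGen (fun p : κ × ℕ => X p.1 p.2) {p | p.2 < s}]
      (fun ω => B s ω k)) (n : ℕ) :
    Measurable[sigmaGen (fun p : κ × ℕ => X p.1 p.2) {p | p.2 < n}] (lrProcess X B C θ n) := by
  refine Finset.measurable_prod _ fun s hs => Finset.measurable_prod _ fun k _ => ?_
  have hsn : s < n := mem_range.1 hs
  refine Measurable.ite ?_ (ENNReal.measurable_ofReal.comp ?_) measurable_const
  · exact sigmaGen_mono (fun p hp => lt_trans hp hsn) _
      ((hB s k) (measurableSet_singleton 1))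
  · exact measurable_bernoulliLR.comp (measurable_sigmaGen (i := (k, s)) hsn)

lemma lintegral_lrProcess [IsProbabilityMeasure μ] (hX : ∀ k s, Measurable (X k s))
    (hind : iIndepFun (fun (p : κ × ℕ) ω => X p.1 p.2 ω) μ)
    (hmean : ∀ k n, (μ {ω | X k n ω = 1}).toReal = θ k)
    (hB : ∀ s k, Measurable[sigmaGen (fun p : κ × ℕ => X p.1 p.2) {p | p.2 < s}]
      (fun ω => B s ω k))
    (hθ : ∀ k, θ k ∈ Set.Ioo (0 : ℝ) 1) (hC : ∀ k, C k ∈ Set.Icc (0 : ℝ) 1) (n : ℕ) :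
    ∫⁻ ω, lrProcess X B C θ n ω ∂μ = 1 := by
  induction n with
  | zero => simp [lrProcess]
  | succ m ih =>
    have hstep : ∀ ω, lrProcess X B C θ (m + 1) ω = lrProcess X B C θ m ω *
        ∏ j ∈ univ.map (Function.Embedding.sectL κ m), if ω ∈ {ω | B j.2 ω j.1 = 1} then
          ENNReal.ofReal (bernoulliLR (C j.1) (θ j.1) (X j.1 j.2 ω)) else 1 := fun ω => by
      rw [lrProcess, prod_range_succ, prod_map]
      rfl
    simp_rw [hstep]
    rw [lintegral_mul_prod_ite_eq (Y := fun p : κ × ℕ => X p.1 p.2) (fun p => hX p.1 p.2) hind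
      (measurable_lrProcess hB m) _ _ _ _ _, ih]
    · simp
    · simp only [mem_map, mem_univ, true_and, forall_exists_index]
      rintro _ k rfl
      exact hB m k (measurableSet_singleton 1)
    · simp only [mem_map, mem_univ, true_and, forall_exists_index]
      rintro _ k rfl
      exact ENNReal.measurable_ofReal.comp
        (measurable_bernoulliLR.comp (measurable_sigmaGen (Set.mem_singleton _)))
    · simp only [mem_map, mem_univ, true_and, forall_exists_index]
      rintro _ k rfl
      exact lintegral_ofReal_bernoulliLR (hC k).1 (hC k).2 (hθ k).1 (hθ k).2 (hX k m) (hmean k m)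

lemma ofReal_prod_exp_le_lrProcess (hθ : ∀ k, θ k ∈ Set.Ioo (0 : ℝ) 1)
    (hC : ∀ k, 0 ≤ C k ∧ C k ≤ θ k) (hX01 : ∀ k n ω, X k n ω = 0 ∨ X k n ω = 1)
    (hB01 : ∀ n ω k, B n ω k = 0 ∨ B n ω k = 1) {n : ℕ} {ω : Ω} {T : κ → ℝ}
    (hS : ∀ k, ∑ s ∈ range n, B s ω k * X k s ω ≤ C k * ∑ s ∈ range n, B s ω k)
    (hT : ∀ k, T k ≤ ∑ s ∈ range n, B s ω k) :
    ENNReal.ofReal (∏ k, Real.exp (T k * klBer (C k) (θ k))) ≤ lrProcess X B C θ n ω := by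
  have hLR : ∀ k s, 0 ≤ bernoulliLR (C k) (θ k) (X k s ω) := fun k s =>
    bernoulliLR_nonneg (hC k).1 ((hC k).2.trans (hθ k).2.le) (hθ k).1 (hθ k).2 _
  have hprod : lrProcess X B C θ n ω = ENNReal.ofReal (∏ k, ∏ s ∈ range n,
      if B s ω k = 1 then bernoulliLR (C k) (θ k) (X k s ω) else 1) := by
    rw [lrProcess, prod_comm, ENNReal.ofReal_prod_of_nonneg fun k _ =>
      prod_nonneg fun s _ => by split_ifs <;> simp [hLR]]
    refine prod_congr rfl fun k _ => ?_
    rw [ENNReal.ofReal_prod_of_nonneg fun s _ => by split_ifs <;> simp [hLR]]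
    exact prod_congr rfl fun s _ => by split_ifs <;> simp
  rw [hprod]
  exact ENNReal.ofReal_le_ofReal <| prod_le_prod (fun k _ => (Real.exp_pos _).le) fun k _ =>
    exp_mul_klBer_le_prod_ite (hC k).1 (hC k).2 (hθ k).1 (hθ k).2 (hB01 · ω k) (hX01 k · ω)
      (hS k) (hT k)

end Bandit

theorem multiarm_underestimate_bound_general
    {Ω : Type*} {mΩ : MeasurableSpace Ω} (μ : Measure Ω) [IsProbabilityMeasure μ]
    (K : ℕ) (θ : Fin K → ℝ) (hθ : ∀ k, θ k ∈ Set.Ioo (0 : ℝ) 1)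
    -- i.i.d. Bernoulli(θ k) rewards, independent across arms and rounds
    (X : Fin K → ℕ → Ω → ℝ)
    (hXvec : ∀ n, StronglyMeasurable (fun ω => fun k => X k n ω))
    (hX01 : ∀ k n ω, X k n ω = 0 ∨ X k n ω = 1)
    (hind : iIndepFun
      (fun (p : Fin K × ℕ) ω => X p.1 p.2 ω) μ)
    (hmean : ∀ k n, (μ {ω | X k n ω = 1}).toReal = θ k)
    -- predictable sampling rule with values in {0,1}
    (B : ℕ → Ω → Fin K → ℝ) (hB01 : ∀ n ω k, B n ω k = 0 ∨ B n ω k = 1)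
    (hB0 : ∀ ω ω', B 0 ω = B 0 ω')
    (hBpred : ∀ n,
      StronglyMeasurable[(Filtration.natural (fun n ω => fun k => X k n ω) hXvec) n]
        (B (n + 1)))
    -- empirical counts and means
    (t : Fin K → ℕ → Ω → ℝ)
    (ht : ∀ k n ω, t k n ω = ∑ s ∈ Finset.range n, B s ω k)
    (hatθ : Fin K → ℕ → Ω → ℝ)
    (hhatθ : ∀ k n ω, hatθ k n ω =
      if t k n ω = 0 then 0
      else (∑ s ∈ Finset.range n, B s ω k * X k s ω) / t k n ω)
    (n : ℕ) (C : Fin K → ℝ) (hC : ∀ k, 0 ≤ C k ∧ C k ≤ θ k)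
    (tbar : Fin K → ℕ) :
    (μ {ω | ∀ k, hatθ k n ω ≤ C k ∧ (tbar k : ℝ) ≤ t k n ω}).toReal ≤
      ∏ k, Real.exp (-(tbar k : ℝ) * klBer (C k) (θ k)) := by
  have hX : ∀ k s, Measurable (X k s) := fun k s =>
    (measurable_pi_apply k).comp (hXvec s).measurable
  have hB := measurable_sigmaGen_of_predictable hXvec hB0 hBpred
  set R := ENNReal.ofReal (∏ k, Real.exp ((tbar k : ℝ) * klBer (C k) (θ k)))
  have hsub : {ω | ∀ k, hatθ k n ω ≤ C k ∧ (tbar k : ℝ) ≤ t k n ω} ⊆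
      {ω | R ≤ lrProcess X B C θ n ω} := fun ω hω =>
    ofReal_prod_exp_le_lrProcess hθ hC hX01 hB01
      (fun k => sum_mul_le_mul_sum_of_mean_le (hB01 · ω k) (hX01 k · ω)
        (by simpa only [hhatθ, ht] using (hω k).1))
      (fun k => by simpa only [ht] using (hω k).2)
  have hR : 0 < R := ENNReal.ofReal_pos.2 (prod_pos fun k _ => Real.exp_pos _)
  have hmarkov : μ {ω | R ≤ lrProcess X B C θ n ω} ≤ R⁻¹ := by
    have hmeas := (measurable_lrProcess (C := C) (θ := θ) hB n).mono
      (sigmaGen_le (fun p : Fin K × ℕ => hX p.1 p.2) _) le_rfl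
    simpa [lintegral_lrProcess hX hind hmean hB hθ
      (fun k => ⟨(hC k).1, (hC k).2.trans (hθ k).2.le⟩) n] using
      meas_ge_le_lintegral_div (μ := μ) hmeas.aemeasurable hR.ne' ENNReal.ofReal_ne_top
  calc _ ≤ (R⁻¹).toReal :=
        ENNReal.toReal_mono (ENNReal.inv_ne_top.2 hR.ne') ((measure_mono hsub).trans hmarkov)
    _ = _ := by
        rw [ENNReal.toReal_inv, ENNReal.toReal_ofReal (prod_nonneg fun k _ => (Real.exp_pos _).le),
          ← prod_inv_distrib]
        simp only [neg_mul, Real.exp_neg]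

theorem multiarm_underestimate_bound
    {Ω : Type*} {mΩ : MeasurableSpace Ω} (μ : Measure Ω) [IsProbabilityMeasure μ]
    (K : ℕ) (hK : 0 < K) (θ : Fin K → ℝ) (hθ : ∀ k, θ k ∈ Set.Ioo (0 : ℝ) 1)
    -- i.i.d. Bernoulli(θ k) rewards, independent across arms and rounds
    (X : Fin K → ℕ → Ω → ℝ)
    (hXvec : ∀ n, StronglyMeasurable (fun ω => fun k => X k n ω))
    (hX01 : ∀ k n ω, X k n ω = 0 ∨ X k n ω = 1)
    (hind : iIndepFun
      (fun (p : Fin K × ℕ) ω => X p.1 p.2 ω) μ)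
    (hmean : ∀ k n, (μ {ω | X k n ω = 1}).toReal = θ k)
    -- predictable sampling rule with values in {0,1}
    (B : ℕ → Ω → Fin K → ℝ) (hB01 : ∀ n ω k, B n ω k = 0 ∨ B n ω k = 1)
    (hB0 : ∀ ω ω', B 0 ω = B 0 ω')
    (hBpred : ∀ n,
      StronglyMeasurable[(Filtration.natural (fun n ω => fun k => X k n ω) hXvec) n]
        (B (n + 1)))
    -- empirical counts and means
    (t : Fin K → ℕ → Ω → ℝ)
    (ht : ∀ k n ω, t k n ω = ∑ s ∈ Finset.range n, B s ω k)
    (hatθ : Fin K → ℕ → Ω → ℝ)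
    (hhatθ : ∀ k n ω, hatθ k n ω =
      if t k n ω = 0 then 0
      else (∑ s ∈ Finset.range n, B s ω k * X k s ω) / t k n ω)
    (n : ℕ) (C : Fin K → ℝ) (hC : ∀ k, 0 ≤ C k ∧ C k ≤ θ k)
    (tbar : Fin K → ℕ) (htbar : ∀ k, 1 ≤ tbar k) :
    (μ {ω | ∀ k, hatθ k n ω ≤ C k ∧ (tbar k : ℝ) ≤ t k n ω}).toReal ≤
      ∏ k, Real.exp (-(tbar k : ℝ) * klBer (C k) (θ k)) :=
  multiarm_underestimate_bound_general (mΩ := mΩ) μ K θ hθ X hXvec hX01 hind hmean B hB01 hB0 hBpred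
    t ht hatθ hhatθ n C hC tbar
end

section
/- Deviation bound for well-sampled rounds: let X_k(t) be i.i.d. Bernoulli(θ_k), ε > 0, and let Λ ⊆ ℕ be a random set of rounds admitting a decomposition Λ ⊆ ∪_{s≥1} Λ(s) where each Λ(s) has at most one element, the event n ∈ Λ(s) is F_n-measurable, and n ∈ Λ(s) implies t_k(n) ≥ εs. Then for all δ > 0, E[ Σ_{n≥1} 1{n ∈ Λ, |θ̂_k(n) − θ_k| > δ} ] ≤ 1/(εδ²). -/
open MeasureTheory ProbabilityTheory Finset Real

/-!
Fix a level `s ≥ 1`. Since `Λ(s)` has at most one element and `t n ≥ ε s` there, the expected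
number of deviating rounds in `Λ(s)` is at most the probability that at some time with at least
`ε s` samples, `|∑ B k (X k - θ)| > δ · ∑ B k`. As the sampling is predictable, Hoeffding's lemma
makes `exp (λ ∑ B k (X k - θ) - λ² / 8 ∑ B k)` a nonnegative supermartingale, and Ville's maximal
inequality for it with `λ = ± 4 δ` bounds that probability by `2 exp (-2 δ² ε s)`, uniformly in
time. Summing over `s ≥ 1` gives `2 / (exp (2 ε δ²) - 1) ≤ 1 / (ε δ²)`.
-/

lemma Real.exp_mul_le_one_sub_add_mul_exp {b : ℝ} (hb : b ∈ Set.Icc 0 1) (w : ℝ) :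
    exp (b * w) ≤ 1 - b + b * exp w := by
  simpa using convexOn_exp.2 (Set.mem_univ 0) (Set.mem_univ w) (sub_nonneg.2 hb.2) hb.1
    (sub_add_cancel 1 b)

lemma lt_abs_sum_mul_sub_of_lt_abs_div_sub {ι : Type*} {s : Finset ι} {w x : ι → ℝ} {θ δ : ℝ}
    (hw : 0 < ∑ i ∈ s, w i) (h : δ < |(∑ i ∈ s, w i * x i) / (∑ i ∈ s, w i) - θ|) :
    δ * ∑ i ∈ s, w i < |∑ i ∈ s, w i * (x i - θ)| := by
  have hmean : (∑ i ∈ s, w i * x i) / (∑ i ∈ s, w i) - θ =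
      (∑ i ∈ s, w i * (x i - θ)) / ∑ i ∈ s, w i := by
    simp only [mul_sub, sum_sub_distrib, ← sum_mul]
    field_simp
  rwa [hmean, abs_div, abs_of_pos hw, lt_div_iff₀ hw] at h

lemma Real.tsum_two_mul_ofReal_exp_neg_two_mul_succ_le {a : ℝ} (ha : 0 < a) :
    ∑' s : ℕ, 2 * ENNReal.ofReal (exp (-(2 * a * (s + 1)))) ≤ ENNReal.ofReal (1 / a) := by
  set r := exp (-(2 * a))
  have hr0 : 0 ≤ r := (exp_pos _).le
  have hr1 : r < 1 := exp_lt_one_iff.mpr (by linarith)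
  have hterm : ∀ s : ℕ, 2 * ENNReal.ofReal (exp (-(2 * a * (s + 1)))) =
      ENNReal.ofReal (2 * r * r ^ s) := fun s ↦ by
    rw [← ENNReal.ofReal_ofNat 2, ← ENNReal.ofReal_mul zero_le_two, mul_assoc 2 r, ← pow_succ',
      ← exp_nat_mul]
    push_cast
    ring_nf
  simp_rw [hterm]
  rw [← ENNReal.ofReal_tsum_of_nonneg (fun s ↦ by positivity)
    ((summable_geometric_of_lt_one hr0 hr1).mul_left _), tsum_mul_left,
    tsum_geometric_of_lt_one hr0 hr1, ← div_eq_mul_inv]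
  refine ENNReal.ofReal_le_ofReal ?_
  rw [div_le_div_iff₀ (sub_pos.2 hr1) ha]
  have hexp : r * exp (2 * a) = 1 := by rw [← exp_add]; simp
  nlinarith [add_one_le_exp (2 * a)]

namespace MeasureTheory

variable {Ω : Type*} {mΩ : MeasurableSpace Ω} {μ : Measure Ω}

lemma tsum_measure_inter_le {A : ℕ → Set Ω} (hA : ∀ n, MeasurableSet (A n))
    (hdisj : Pairwise (Function.onFun Disjoint A)) (G : Set Ω) : ∑' n, μ (A n ∩ G) ≤ μ G :=
  calc ∑' n, μ (A n ∩ G) ≤ ∑' n, μ (A n ∩ toMeasurable μ G) :=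
        ENNReal.tsum_le_tsum fun _ ↦ measure_mono (Set.inter_subset_inter_right _
          (subset_toMeasurable μ G))
    _ = μ (⋃ n, A n ∩ toMeasurable μ G) :=
        (measure_iUnion (fun _ _ hmn ↦ (hdisj hmn).mono Set.inter_subset_left Set.inter_subset_left)
          fun n ↦ (hA n).inter (measurableSet_toMeasurable μ G)).symm
    _ ≤ μ (toMeasurable μ G) := measure_mono (Set.iUnion_subset fun _ ↦ Set.inter_subset_right)
    _ = μ G := measure_toMeasurable G

lemma integral_eq_measureReal_of_eq_zero_or_eq_one [IsFiniteMeasure μ] {X : Ω → ℝ}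
    (hX : Measurable X) (h01 : ∀ ω, X ω = 0 ∨ X ω = 1) : μ[X] = μ.real {ω | X ω = 1} := by
  have hX_eq : X = {ω | X ω = 1}.indicator 1 :=
    funext fun ω ↦ by rcases h01 ω with h | h <;> simp [h]
  calc μ[X] = ∫ ω, {ω | X ω = 1}.indicator 1 ω ∂μ := by nth_rewrite 1 [hX_eq]; rfl
    _ = μ.real {ω | X ω = 1} := integral_indicator_one (hX (measurableSet_singleton 1))

variable {𝒢 : Filtration ℕ mΩ} {f : ℕ → Ω → ℝ}

theorem Supermartingale.mul_measureReal_exists_le_le [IsFiniteMeasure μ]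
    (hf : Supermartingale f 𝒢 μ) (hnonneg : 0 ≤ f) (a : ℝ) (n : ℕ) :
    a * μ.real {ω | ∃ k ≤ n, a ≤ f k ω} ≤ μ[f 0] := by
  set τ : Ω → ℕ := hittingBtwn f (Set.Ici a) 0 n
  have hτn : ∀ ω, τ ω ≤ n := fun ω ↦ hittingBtwn_le ω
  have hτ : IsStoppingTime 𝒢 (fun ω ↦ (τ ω : ℕ∞)) :=
    hf.stronglyAdapted.adapted.isStoppingTime_hittingBtwn measurableSet_Ici
  have hE : MeasurableSet {ω | ∃ k ≤ n, a ≤ f k ω} := by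
    have : {ω | ∃ k ≤ n, a ≤ f k ω} = ⋃ k ∈ Set.Iic n, {ω | a ≤ f k ω} := by ext; simp
    rw [this]
    exact .biUnion (Set.to_countable _) fun k _ ↦
      measurableSet_le measurable_const ((hf.stronglyMeasurable k).measurable.mono (𝒢.le k) le_rfl)
  have hint : Integrable (stoppedValue f fun ω ↦ (τ ω : ℕ∞)) μ :=
    integrable_stoppedValue ℕ hτ hf.integrable (N := n) fun ω ↦ WithTop.coe_le_coe.mpr (hτn ω)
  have hstop : μ[stoppedValue f fun ω ↦ (τ ω : ℕ∞)] ≤ μ[f 0] := by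
    have := hf.neg.expected_stoppedValue_mono (isStoppingTime_const 𝒢 0) hτ
      (fun _ ↦ zero_le) (N := n) (fun ω ↦ WithTop.coe_le_coe.mpr (hτn ω))
    simpa [stoppedValue, integral_neg] using this
  calc a * μ.real {ω | ∃ k ≤ n, a ≤ f k ω}
      ≤ ∫ ω in {ω | ∃ k ≤ n, a ≤ f k ω}, stoppedValue f (fun ω ↦ (τ ω : ℕ∞)) ω ∂μ := by
        refine setIntegral_ge_of_const_le_real hE (measure_ne_top _ _) (fun ω hω ↦ ?_)
          hint.integrableOn
        obtain ⟨k, hk, hak⟩ := hω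
        exact stoppedValue_hittingBtwn_mem ⟨k, ⟨Nat.zero_le k, hk⟩, hak⟩
    _ ≤ μ[stoppedValue f fun ω ↦ (τ ω : ℕ∞)] :=
        setIntegral_le_integral hint (.of_forall fun ω ↦ hnonneg _ ω)
    _ ≤ μ[f 0] := hstop

theorem Supermartingale.measure_exists_le_le [IsFiniteMeasure μ]
    (hf : Supermartingale f 𝒢 μ) (hnonneg : 0 ≤ f) {a : ℝ} (ha : 0 < a) :
    μ {ω | ∃ k, a ≤ f k ω} ≤ ENNReal.ofReal (μ[f 0] / a) := by
  have hunion : {ω | ∃ k, a ≤ f k ω} = ⋃ n, {ω | ∃ k ≤ n, a ≤ f k ω} := by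
    ext ω
    simp only [Set.mem_ofPred_eq, Set.mem_iUnion]
    exact ⟨fun ⟨k, hk⟩ ↦ ⟨k, k, le_rfl, hk⟩, fun ⟨_, k, _, hk⟩ ↦ ⟨k, hk⟩⟩
  have hmono : Monotone fun n ↦ {ω | ∃ k ≤ n, a ≤ f k ω} :=
    fun _ _ hmn _ ⟨k, hk, hak⟩ ↦ ⟨k, hk.trans hmn, hak⟩
  rw [hunion, hmono.measure_iUnion]
  refine iSup_le fun n ↦ (ENNReal.le_ofReal_iff_toReal_le (measure_ne_top _ _) ?_).mpr ?_
  · exact div_nonneg (integral_nonneg (hnonneg 0)) ha.le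
  · rw [le_div_iff₀ ha, mul_comm]
    exact hf.mul_measureReal_exists_le_le hnonneg a n

end MeasureTheory

namespace ProbabilityTheory

variable {Ω : Type*} {mΩ : MeasurableSpace Ω} {μ : Measure Ω}

lemma integrable_exp_mul_sub_integral_sub [IsProbabilityMeasure μ] {X : Ω → ℝ}
    (hX : AEMeasurable X μ) (hX01 : ∀ᵐ ω ∂μ, X ω ∈ Set.Icc 0 1) (l : ℝ) :
    Integrable (fun ω ↦ exp (l * (X ω - μ[X]) - l ^ 2 / 8)) μ := by
  simp_rw [sub_eq_add_neg _ (l ^ 2 / 8), exp_add]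
  exact ((hasSubgaussianMGF_of_mem_Icc hX hX01).integrable_exp_mul l).mul_const _

lemma integral_exp_mul_sub_integral_sub_le_one [IsProbabilityMeasure μ] {X : Ω → ℝ}
    (hX : AEMeasurable X μ) (hX01 : ∀ᵐ ω ∂μ, X ω ∈ Set.Icc 0 1) (l : ℝ) :
    ∫ ω, exp (l * (X ω - μ[X]) - l ^ 2 / 8) ∂μ ≤ 1 := by
  have hmgf : ∫ ω, exp (l * (X ω - μ[X])) ∂μ ≤ exp (l ^ 2 / 8) := by
    refine ((hasSubgaussianMGF_of_mem_Icc hX hX01).mgf_le l).trans_eq ?_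
    norm_num
    ring_nf
  simp_rw [sub_eq_add_neg _ (l ^ 2 / 8), exp_add, integral_mul_const]
  calc _ ≤ exp (l ^ 2 / 8) * exp (-(l ^ 2 / 8)) := by gcongr
    _ = 1 := by rw [← exp_add, add_neg_cancel, exp_zero]

lemma integral_mul_exp_mul_le_of_indep {m : MeasurableSpace Ω}
    (hm : m ≤ mΩ) {F b W : Ω → ℝ} (hF : Measurable[m] F) (hFint : Integrable F μ) (hF0 : 0 ≤ F)
    (hb : Measurable[m] b) (hb01 : ∀ ω, b ω ∈ Set.Icc 0 1)
    (hWint : Integrable (fun ω ↦ exp (W ω)) μ)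
    (hindep : Indep m (MeasurableSpace.comap W inferInstance) μ)
    (hW1 : ∫ ω, exp (W ω) ∂μ ≤ 1) :
    ∫ ω, F ω * exp (b ω * W ω) ∂μ ≤ ∫ ω, F ω ∂μ := by
  have hFb : Integrable (fun ω ↦ F ω * b ω) μ := by
    refine hFint.mono' ((hF.mul hb).mono hm le_rfl).aestronglyMeasurable (.of_forall fun ω ↦ ?_)
    rw [norm_mul, Real.norm_of_nonneg (hF0 ω), Real.norm_of_nonneg (hb01 ω).1]
    exact mul_le_of_le_one_right (hF0 ω) (hb01 ω).2
  have hFb_W : IndepFun (fun ω ↦ F ω * b ω) (fun ω ↦ exp (W ω)) μ := by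
    rw [IndepFun_iff_Indep]
    refine indep_of_indep_of_le_right (indep_of_indep_of_le_left hindep (hF.mul hb).comap_le) ?_
    exact (measurable_exp.comp (Measurable.of_comap_le le_rfl)).comap_le
  have hFb_int : Integrable (fun ω ↦ F ω * b ω * exp (W ω)) μ := hFb_W.integrable_mul hFb hWint
  have hF1b : Integrable (fun ω ↦ F ω * (1 - b ω)) μ :=
    (hFint.sub hFb).congr (.of_forall fun ω ↦ by simp [mul_sub])
  calc ∫ ω, F ω * exp (b ω * W ω) ∂μ
      ≤ ∫ ω, (F ω * (1 - b ω) + F ω * b ω * exp (W ω)) ∂μ := by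
        refine integral_mono_of_nonneg (.of_forall fun ω ↦ mul_nonneg (hF0 ω) (exp_pos _).le)
          (hF1b.add hFb_int) (.of_forall fun ω ↦ ?_)
        calc F ω * exp (b ω * W ω) ≤ F ω * (1 - b ω + b ω * exp (W ω)) :=
              mul_le_mul_of_nonneg_left (exp_mul_le_one_sub_add_mul_exp (hb01 ω) _) (hF0 ω)
          _ = _ := by ring
    _ = ∫ ω, F ω * (1 - b ω) ∂μ + (∫ ω, F ω * b ω ∂μ) * ∫ ω, exp (W ω) ∂μ := by
        rw [integral_add hF1b hFb_int]
        congr 1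
        exact hFb_W.integral_mul_eq_mul_integral hFb.aestronglyMeasurable hWint.aestronglyMeasurable
    _ ≤ ∫ ω, F ω * (1 - b ω) ∂μ + ∫ ω, F ω * b ω ∂μ := by
        gcongr
        exact mul_le_of_le_one_right (integral_nonneg fun ω ↦ mul_nonneg (hF0 ω) (hb01 ω).1) hW1
    _ = ∫ ω, F ω ∂μ := by
        rw [← integral_add hF1b hFb]
        ring_nf

lemma iIndepFun.indep_natural_comap_succ {β : Type*} [TopologicalSpace β]
    [TopologicalSpace.MetrizableSpace β] [MeasurableSpace β] [BorelSpace β] {X : ℕ → Ω → β} (hind : iIndepFun X μ)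
    (hXmeas : ∀ n, StronglyMeasurable (X n)) (n : ℕ) :
    Indep (Filtration.natural X hXmeas n) (MeasurableSpace.comap (X (n + 1)) inferInstance) μ := by
  have hdisj : Disjoint (Set.Iic n) {n + 1} := by simp
  have h := indep_iSup_of_disjoint (fun i ↦ (hXmeas i).measurable.comap_le)
    ((iIndepFun_iff_iIndep _ _ _).mp hind) hdisj
  simp only [Set.mem_Iic, Set.mem_singleton_iff, iSup_iSup_eq_left] at h
  exact h

structure IsAdaptiveSampling (ℱ : Filtration ℕ mΩ) (μ : Measure Ω) (X B : ℕ → Ω → ℝ) (θ : ℝ) :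
    Prop where
  adapted : Adapted ℱ X
  indep_succ : ∀ n, Indep (ℱ n) (MeasurableSpace.comap (X (n + 1)) inferInstance) μ
  mem_Icc : ∀ n ω, X n ω ∈ Set.Icc 0 1
  integral_eq : ∀ n, μ[X n] = θ
  weight_mem_Icc : ∀ n ω, B n ω ∈ Set.Icc 0 1
  weight_zero_const : ∀ ω ω', B 0 ω = B 0 ω'
  measurable_weight_succ : ∀ n, Measurable[ℱ n] (B (n + 1))

/-- Time `n` includes round `n`, so that the process is adapted to `ℱ`. -/
noncomputable def hoeffdingProcess (X B : ℕ → Ω → ℝ) (θ l : ℝ) (n : ℕ) (ω : Ω) : ℝ :=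
  exp (∑ k ∈ range (n + 1), B k ω * (l * (X k ω - θ) - l ^ 2 / 8))

namespace IsAdaptiveSampling

variable {ℱ : Filtration ℕ mΩ} {X B : ℕ → Ω → ℝ} {θ : ℝ}

lemma measurable_weight (h : IsAdaptiveSampling ℱ μ X B θ) {k n : ℕ} (hkn : k ≤ n) :
    Measurable[ℱ n] (B k) := by
  cases k with
  | zero => exact @measurable_const' _ _ _ (ℱ n) _ h.weight_zero_const
  | succ j => exact (h.measurable_weight_succ j).mono (ℱ.mono (by omega)) le_rfl

lemma adapted_hoeffdingProcess (h : IsAdaptiveSampling ℱ μ X B θ) (l : ℝ) :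
    Adapted ℱ (hoeffdingProcess X B θ l) := fun n ↦ by
  refine measurable_exp.comp (Finset.measurable_fun_sum _ fun k hk ↦ ?_)
  have hkn : k ≤ n := Nat.lt_succ_iff.mp (mem_range.mp hk)
  exact (h.measurable_weight hkn).mul
    ((((h.adapted k).mono (ℱ.mono hkn) le_rfl).sub_const θ).const_mul l |>.sub_const _)

lemma hoeffdingProcess_succ (n : ℕ) (l : ℝ) (ω : Ω) :
    hoeffdingProcess X B θ l (n + 1) ω =
      hoeffdingProcess X B θ l n ω * exp (B (n + 1) ω * (l * (X (n + 1) ω - θ) - l ^ 2 / 8)) := by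
  rw [hoeffdingProcess, sum_range_succ, exp_add, hoeffdingProcess]

lemma integrable_hoeffdingProcess [IsFiniteMeasure μ] (h : IsAdaptiveSampling ℱ μ X B θ)
    (l : ℝ) (n : ℕ) : Integrable (hoeffdingProcess X B θ l n) μ := by
  refine Integrable.of_mem_Icc 0 (exp ((n + 1) * (|l| * (1 + |θ|))))
    ((h.adapted_hoeffdingProcess l n).mono (ℱ.le n) le_rfl).aemeasurable
    (.of_forall fun ω ↦ ⟨(exp_pos _).le, exp_le_exp.mpr ?_⟩)
  calc ∑ k ∈ range (n + 1), B k ω * (l * (X k ω - θ) - l ^ 2 / 8)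
      ≤ ∑ k ∈ range (n + 1), |l| * (1 + |θ|) := sum_le_sum fun k _ ↦ by
        obtain ⟨hB0, hB1⟩ := h.weight_mem_Icc k ω
        obtain ⟨hX0, hX1⟩ := h.mem_Icc k ω
        have hXθ : |X k ω - θ| ≤ 1 + |θ| :=
          (abs_sub _ _).trans (by rw [abs_of_nonneg hX0]; linarith)
        have hlX : l * (X k ω - θ) ≤ |l| * (1 + |θ|) := (le_abs_self _).trans
          (by rw [abs_mul]; exact mul_le_mul_of_nonneg_left hXθ (abs_nonneg l))
        have hC : 0 ≤ |l| * (1 + |θ|) := by positivity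
        nlinarith [mul_le_mul_of_nonneg_left hlX hB0, mul_nonneg hB0 (sq_nonneg l)]
    _ = (n + 1) * (|l| * (1 + |θ|)) := by simp [sum_const]

lemma supermartingale_hoeffdingProcess [IsProbabilityMeasure μ]
    (h : IsAdaptiveSampling ℱ μ X B θ) (l : ℝ) :
    Supermartingale (hoeffdingProcess X B θ l) ℱ μ := by
  refine supermartingale_of_setIntegral_succ_le
    (fun n ↦ (h.adapted_hoeffdingProcess l n).stronglyMeasurable)
    (h.integrable_hoeffdingProcess l) fun n s hs ↦ ?_
  have hX : AEMeasurable (X (n + 1)) μ := ((h.adapted (n + 1)).mono (ℱ.le _) le_rfl).aemeasurable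
  have hX01 : ∀ᵐ ω ∂μ, X (n + 1) ω ∈ Set.Icc 0 1 := .of_forall (h.mem_Icc (n + 1))
  have hindep : Indep (ℱ n) (MeasurableSpace.comap
      (fun ω ↦ l * (X (n + 1) ω - θ) - l ^ 2 / 8) inferInstance) μ := by
    refine indep_of_indep_of_le_right (h.indep_succ n) (Measurable.comap_le ?_)
    exact ((measurable_id.sub_const θ).const_mul l |>.sub_const _).comp
      (Measurable.of_comap_le le_rfl)
  rw [← integral_indicator (ℱ.le n s hs), ← integral_indicator (ℱ.le n s hs)]
  calc ∫ ω, s.indicator (hoeffdingProcess X B θ l (n + 1)) ω ∂μ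
      = ∫ ω, s.indicator (hoeffdingProcess X B θ l n) ω *
          exp (B (n + 1) ω * (l * (X (n + 1) ω - θ) - l ^ 2 / 8)) ∂μ := by
        congr 1 with ω
        by_cases hω : ω ∈ s <;> simp [hω, hoeffdingProcess_succ]
    _ ≤ ∫ ω, s.indicator (hoeffdingProcess X B θ l n) ω ∂μ := by
        refine integral_mul_exp_mul_le_of_indep (ℱ.le n)
          ((h.adapted_hoeffdingProcess l n).indicator hs)
          ((h.integrable_hoeffdingProcess l n).indicator (ℱ.le n s hs))
          (Set.indicator_nonneg fun ω _ ↦ (exp_pos _).le) (h.measurable_weight_succ n)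
          (h.weight_mem_Icc (n + 1)) ?_ hindep ?_
        · simpa [h.integral_eq] using integrable_exp_mul_sub_integral_sub hX hX01 l
        · simpa [h.integral_eq] using integral_exp_mul_sub_integral_sub_le_one hX hX01 l

lemma integral_hoeffdingProcess_zero_le_one [IsProbabilityMeasure μ]
    (h : IsAdaptiveSampling ℱ μ X B θ) (l : ℝ) :
    μ[hoeffdingProcess X B θ l 0] ≤ 1 := by
  have hX : AEMeasurable (X 0) μ := ((h.adapted 0).mono (ℱ.le _) le_rfl).aemeasurable
  have hX01 : ∀ᵐ ω ∂μ, X 0 ω ∈ Set.Icc 0 1 := .of_forall (h.mem_Icc 0)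
  have := integral_mul_exp_mul_le_of_indep (μ := μ) bot_le (F := fun _ ↦ 1) measurable_const
    (integrable_const 1) (fun _ ↦ zero_le_one) (@measurable_const' _ _ _ ⊥ _ h.weight_zero_const)
    (h.weight_mem_Icc 0)
    (by simpa [h.integral_eq] using integrable_exp_mul_sub_integral_sub hX hX01 l)
    (indep_bot_left _)
    (by simpa [h.integral_eq] using integral_exp_mul_sub_integral_sub_le_one hX hX01 l)
  simpa [hoeffdingProcess] using this

lemma measure_exists_le_sub_le [IsProbabilityMeasure μ] (h : IsAdaptiveSampling ℱ μ X B θ)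
    (l : ℝ) {a : ℝ} (ha : 0 < a) :
    μ {ω | ∃ n, a ≤ l * ∑ k ∈ range n, B k ω * (X k ω - θ) - l ^ 2 / 8 * ∑ k ∈ range n, B k ω}
      ≤ ENNReal.ofReal (exp (-a)) := by
  calc _ ≤ μ {ω | ∃ n, exp a ≤ hoeffdingProcess X B θ l n ω} := by
        refine measure_mono fun ω ⟨n, hn⟩ ↦ ?_
        cases n with
        | zero => simp at hn; linarith
        | succ k =>
          refine ⟨k, exp_le_exp.mpr (hn.trans_eq ?_)⟩
          rw [mul_sum, mul_sum, ← sum_sub_distrib]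
          exact sum_congr rfl fun _ _ ↦ by ring
    _ ≤ ENNReal.ofReal (μ[hoeffdingProcess X B θ l 0] / exp a) :=
        (h.supermartingale_hoeffdingProcess l).measure_exists_le_le
          (fun _ _ ↦ (exp_pos _).le) (exp_pos a)
    _ ≤ ENNReal.ofReal (exp (-a)) := by
        rw [exp_neg, ← one_div]
        gcongr
        exact h.integral_hoeffdingProcess_zero_le_one l

lemma measure_exists_lt_abs_le [IsProbabilityMeasure μ] (h : IsAdaptiveSampling ℱ μ X B θ)
    {c δ : ℝ} (hc : 0 < c) (hδ : 0 < δ) :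
    μ {ω | ∃ n, c ≤ ∑ k ∈ range n, B k ω ∧
        δ * ∑ k ∈ range n, B k ω < |∑ k ∈ range n, B k ω * (X k ω - θ)|}
      ≤ 2 * ENNReal.ofReal (exp (-(2 * δ ^ 2 * c))) := by
  have ha : 0 < 2 * δ ^ 2 * c := by positivity
  calc _ ≤ μ ({ω | ∃ n, 2 * δ ^ 2 * c ≤ 4 * δ * ∑ k ∈ range n, B k ω * (X k ω - θ) -
              (4 * δ) ^ 2 / 8 * ∑ k ∈ range n, B k ω} ∪
            {ω | ∃ n, 2 * δ ^ 2 * c ≤ -(4 * δ) * ∑ k ∈ range n, B k ω * (X k ω - θ) -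
              (-(4 * δ)) ^ 2 / 8 * ∑ k ∈ range n, B k ω}) := by
        refine measure_mono fun ω ⟨n, hcn, hdev⟩ ↦ ?_
        have hcn' := mul_le_mul_of_nonneg_left hcn (by positivity : (0 : ℝ) ≤ 2 * δ ^ 2)
        rcases lt_abs.mp hdev with hS | hS
        · have := mul_lt_mul_of_pos_left hS (by positivity : (0 : ℝ) < 4 * δ)
          exact Or.inl ⟨n, by nlinarith⟩
        · have := mul_lt_mul_of_pos_left hS (by positivity : (0 : ℝ) < 4 * δ)
          exact Or.inr ⟨n, by nlinarith⟩
    _ ≤ ENNReal.ofReal (exp (-(2 * δ ^ 2 * c))) + ENNReal.ofReal (exp (-(2 * δ ^ 2 * c))) :=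
        (measure_union_le _ _).trans
          (add_le_add (h.measure_exists_le_sub_le _ ha) (h.measure_exists_le_sub_le _ ha))
    _ = 2 * ENNReal.ofReal (exp (-(2 * δ ^ 2 * c))) := (two_mul _).symm

lemma tsum_measure_mem_and_lt_abs_le [IsProbabilityMeasure μ]
    (h : IsAdaptiveSampling ℱ μ X B θ) {L : Ω → Set ℕ} (hL : ∀ n, MeasurableSet {ω | n ∈ L ω})
    (hL1 : ∀ ω, (L ω).Subsingleton) {c δ : ℝ} (hc : 0 < c) (hδ : 0 < δ)
    (hLc : ∀ ω n, n ∈ L ω → c ≤ ∑ k ∈ range n, B k ω) :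
    ∑' n, μ {ω | n ∈ L ω ∧
        δ < |(∑ k ∈ range n, B k ω * X k ω) / (∑ k ∈ range n, B k ω) - θ|}
      ≤ 2 * ENNReal.ofReal (exp (-(2 * δ ^ 2 * c))) := by
  refine le_trans ?_ ((tsum_measure_inter_le hL
    (fun _ _ hmn ↦ Set.disjoint_left.mpr fun ω hm hn ↦ hmn (hL1 ω hm hn)) _).trans
    (h.measure_exists_lt_abs_le hc hδ))
  refine ENNReal.tsum_le_tsum fun n ↦ measure_mono fun ω ⟨hn, hdev⟩ ↦ ⟨hn, n, hLc ω n hn, ?_⟩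
  exact lt_abs_sum_mul_sub_of_lt_abs_div_sub (hc.trans_le (hLc ω n hn)) hdev

lemma of_bernoulli [IsFiniteMeasure μ] (hXmeas : ∀ n, StronglyMeasurable (X n))
    (hX01 : ∀ n ω, X n ω = 0 ∨ X n ω = 1) (hind : iIndepFun X μ)
    (hmean : ∀ n, μ.real {ω | X n ω = 1} = θ) (hB01 : ∀ n ω, B n ω = 0 ∨ B n ω = 1)
    (hB0 : ∀ ω ω', B 0 ω = B 0 ω')
    (hBpred : ∀ n, Measurable[Filtration.natural X hXmeas n] (B (n + 1))) :
    IsAdaptiveSampling (Filtration.natural X hXmeas) μ X B θ where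
  adapted := (Filtration.stronglyAdapted_natural hXmeas).adapted
  indep_succ := hind.indep_natural_comap_succ hXmeas
  mem_Icc n ω := by rcases hX01 n ω with h | h <;> simp [h]
  integral_eq n := by
    rw [integral_eq_measureReal_of_eq_zero_or_eq_one (hXmeas n).measurable (hX01 n), hmean]
  weight_mem_Icc n ω := by rcases hB01 n ω with h | h <;> simp [h]
  weight_zero_const := hB0
  measurable_weight_succ := hBpred

end IsAdaptiveSampling

end ProbabilityTheory

theorem deviation_bound_well_sampled_rounds_general
    {Ω : Type*} {mΩ : MeasurableSpace Ω} (μ : Measure Ω) [IsProbabilityMeasure μ]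
    (θ : ℝ)
    -- i.i.d. Bernoulli(θ) rewards of the arm under consideration
    (X : ℕ → Ω → ℝ) (hXmeas : ∀ n, StronglyMeasurable (X n))
    (hX01 : ∀ n ω, X n ω = 0 ∨ X n ω = 1)
    (hind : iIndepFun X μ)
    (hmean : ∀ n, (μ {ω | X n ω = 1}).toReal = θ)
    -- sampling rule with values in {0,1}, predictable w.r.t. the reward filtration
    (B : ℕ → Ω → ℝ) (hB01 : ∀ n ω, B n ω = 0 ∨ B n ω = 1)
    (hB0 : ∀ ω ω', B 0 ω = B 0 ω')
    (hBpred : ∀ n, StronglyMeasurable[(Filtration.natural X hXmeas) n] (B (n + 1)))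
    -- empirical counts and means
    (t : ℕ → Ω → ℝ) (ht : ∀ n ω, t n ω = ∑ s ∈ Finset.range n, B s ω)
    (hatθ : ℕ → Ω → ℝ)
    (hhatθ : ∀ n ω, hatθ n ω =
      if t n ω = 0 then 0
      else (∑ s ∈ Finset.range n, B s ω * X s ω) / t n ω)
    -- the random set of rounds and its decomposition
    (ε δ : ℝ) (hε : 0 < ε) (hδ : 0 < δ)
    (Λ : Ω → Set ℕ) (Λs : ℕ → Ω → Set ℕ)
    (hcover : ∀ ω, Λ ω ⊆ ⋃ s : ℕ, ⋃ (_ : 1 ≤ s), Λs s ω)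
    (hsingle : ∀ s ω, (Λs s ω).Subsingleton)
    (hmeasE : ∀ s n, MeasurableSet[(Filtration.natural X hXmeas) n] {ω | n ∈ Λs s ω})
    (hcount : ∀ s ω n, n ∈ Λs s ω → ε * s ≤ t n ω) :
    ∑' n : ℕ, (μ {ω | n ∈ Λ ω ∧ δ < |hatθ n ω - θ|}).toReal ≤ 1 / (ε * δ ^ 2) := by
  have hS := IsAdaptiveSampling.of_bernoulli hXmeas hX01 hind hmean hB01 hB0
    fun n ↦ (hBpred n).measurable
  -- the case `t n ω = 0` of `hhatθ` agrees with `x / 0 = 0`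
  have hhat : ∀ n ω, hatθ n ω = (∑ k ∈ range n, B k ω * X k ω) / ∑ k ∈ range n, B k ω :=
    fun n ω ↦ by rw [hhatθ, ← ht]; split_ifs with h <;> simp [h]
  have hlevel : ∀ s : ℕ, ∑' n, μ {ω | n ∈ Λs (s + 1) ω ∧ δ < |hatθ n ω - θ|} ≤
      2 * ENNReal.ofReal (exp (-(2 * (ε * δ ^ 2) * (s + 1)))) := fun s ↦ by
    simp_rw [hhat]
    refine (hS.tsum_measure_mem_and_lt_abs_le
      (fun n ↦ (Filtration.natural X hXmeas).le n _ (hmeasE _ n)) (hsingle _)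
      (c := ε * (s + 1)) (by positivity) hδ fun ω n hn ↦ ?_).trans_eq (by ring_nf)
    simpa [ht] using hcount _ ω n hn
  have hcover_levels : ∀ n, {ω | n ∈ Λ ω ∧ δ < |hatθ n ω - θ|} ⊆
      ⋃ s : ℕ, {ω | n ∈ Λs (s + 1) ω ∧ δ < |hatθ n ω - θ|} := by
    rintro n ω ⟨hn, hdev⟩
    obtain ⟨s, hs, hns⟩ : ∃ s, 1 ≤ s ∧ n ∈ Λs s ω := by simpa using hcover ω hn
    exact Set.mem_iUnion.mpr ⟨s - 1, by rwa [Nat.sub_add_cancel hs], hdev⟩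
  rw [← ENNReal.tsum_toReal_eq fun n ↦ measure_ne_top μ _]
  refine ENNReal.toReal_le_of_le_ofReal (by positivity) ?_
  calc ∑' n, μ {ω | n ∈ Λ ω ∧ δ < |hatθ n ω - θ|}
      ≤ ∑' n, ∑' s : ℕ, μ {ω | n ∈ Λs (s + 1) ω ∧ δ < |hatθ n ω - θ|} :=
        ENNReal.tsum_le_tsum fun n ↦ (measure_mono (hcover_levels n)).trans (measure_iUnion_le _)
    _ = ∑' s : ℕ, ∑' n, μ {ω | n ∈ Λs (s + 1) ω ∧ δ < |hatθ n ω - θ|} := ENNReal.tsum_comm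
    _ ≤ ∑' s : ℕ, 2 * ENNReal.ofReal (exp (-(2 * (ε * δ ^ 2) * (s + 1)))) :=
        ENNReal.tsum_le_tsum hlevel
    _ ≤ ENNReal.ofReal (1 / (ε * δ ^ 2)) :=
        Real.tsum_two_mul_ofReal_exp_neg_two_mul_succ_le (by positivity)

theorem deviation_bound_well_sampled_rounds
    {Ω : Type*} {mΩ : MeasurableSpace Ω} (μ : Measure Ω) [IsProbabilityMeasure μ]
    (θ : ℝ) (hθ : θ ∈ Set.Ioo (0 : ℝ) 1)
    -- i.i.d. Bernoulli(θ) rewards of the arm under consideration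
    (X : ℕ → Ω → ℝ) (hXmeas : ∀ n, StronglyMeasurable (X n))
    (hX01 : ∀ n ω, X n ω = 0 ∨ X n ω = 1)
    (hind : iIndepFun X μ)
    (hmean : ∀ n, (μ {ω | X n ω = 1}).toReal = θ)
    -- sampling rule with values in {0,1}, predictable w.r.t. the reward filtration
    (B : ℕ → Ω → ℝ) (hB01 : ∀ n ω, B n ω = 0 ∨ B n ω = 1)
    (hB0 : ∀ ω ω', B 0 ω = B 0 ω')
    (hBpred : ∀ n, StronglyMeasurable[(Filtration.natural X hXmeas) n] (B (n + 1)))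
    -- empirical counts and means
    (t : ℕ → Ω → ℝ) (ht : ∀ n ω, t n ω = ∑ s ∈ Finset.range n, B s ω)
    (hatθ : ℕ → Ω → ℝ)
    (hhatθ : ∀ n ω, hatθ n ω =
      if t n ω = 0 then 0
      else (∑ s ∈ Finset.range n, B s ω * X s ω) / t n ω)
    -- the random set of rounds and its decomposition
    (ε δ : ℝ) (hε : 0 < ε) (hδ : 0 < δ)
    (Λ : Ω → Set ℕ) (Λs : ℕ → Ω → Set ℕ)
    (hcover : ∀ ω, Λ ω ⊆ ⋃ s : ℕ, ⋃ (_ : 1 ≤ s), Λs s ω)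
    (hsingle : ∀ s ω, (Λs s ω).Subsingleton)
    (hmeasE : ∀ s n, MeasurableSet[(Filtration.natural X hXmeas) n] {ω | n ∈ Λs s ω})
    (hcount : ∀ s ω n, n ∈ Λs s ω → ε * s ≤ t n ω) :
    ∑' n : ℕ, (μ {ω | n ∈ Λ ω ∧ δ < |hatθ n ω - θ|}).toReal ≤ 1 / (ε * δ ^ 2) :=
  deviation_bound_well_sampled_rounds_general (mΩ := mΩ) μ θ X hXmeas hX01 hind hmean B hB01 hB0
    hBpred t ht hatθ hhatθ ε δ hε hδ Λ Λs hcover hsingle hmeasE hcount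
end
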